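/- Let 0 < λ < 1 and let g be a probability density on ℝ with finite second moment and zero mean. Then the function f̂(ξ) = ∏_{k=0}^{∞} ∏_{j=0}^{k} ĝ(λ^j (1−λ)^{k−j} ξ)^{binom(k,j)} satisfies the functional equation f̂(ξ) = f̂(λξ) f̂((1−λ)ξ) ĝ(ξ), and the corresponding probability measure f has variance Var[f] = Var[g] / (2λ(1−λ)). -/

import Mathlib

/-!
Write `P k ξ = ∏_{j ≤ k} ĝ(λ^j (1-λ)^(k-j) ξ)^(binom(k,j))`. Pascal's rule gives
`P (k+1) ξ = P k (λξ) · P k ((1-λ)ξ)` and `P 0 = ĝ`, so the functional equation is the splitting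
`∏ₖ P k = P 0 · ∏ₖ P (k+1)` of a convergent product. Convergence: zero mean and a finite second
moment give `|ĝ(η) - 1| ≤ C η²`, hence `|P k ξ - 1| ≤ exp (C ξ² (λ² + (1-λ)²)^k) - 1`, which is
summable since `λ² + (1-λ)² < 1`.

For the variance, differentiate the functional equation twice at `0`:
`f̂''(0) = (λ² + (1-λ)²) f̂''(0) + 2λ(1-λ) f̂'(0)² + ĝ''(0)`, where `f̂'(0) = -i E_f[x]`,
`f̂''(0) = -E_f[x²]` and `ĝ''(0) = -E_g[x²]`.
-/

open MeasureTheory Real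

/-- Fourier transform `ĥ(ξ) = ∫ h(x) e^{-iξx} dx`. -/
noncomputable def ft (h : ℝ → ℝ) (ξ : ℝ) : ℂ :=
  ∫ x : ℝ, (h x : ℂ) * Complex.exp (-(Complex.I * ξ * x))

/-- `f̂(ξ) = ∏_{k=0}^∞ ∏_{j=0}^{k} ĝ(λ^j (1-λ)^{k-j} ξ)^(binom(k,j))`. -/
noncomputable def fhat (g : ℝ → ℝ) (lam : ℝ) (ξ : ℝ) : ℂ :=
  ∏' k : ℕ, ∏ j ∈ Finset.range (k + 1),
    (ft g (lam ^ j * (1 - lam) ^ (k - j) * ξ)) ^ (Nat.choose k j)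

open Complex Finset

noncomputable section

def pascalProd {R M : Type*} [CommMonoid R] [CommMonoid M] (ψ : R → M) (a b : R) (k : ℕ)
    (ξ : R) : M :=
  ∏ j ∈ range (k + 1), ψ (a ^ j * b ^ (k - j) * ξ) ^ k.choose j

section Pascal

variable {R M : Type*} [CommMonoid R] [CommMonoid M] (ψ : R → M) (a b : R)

@[simp]
lemma pascalProd_zero (ξ : R) : pascalProd ψ a b 0 ξ = ψ ξ := by
  simp [pascalProd]

lemma pascalProd_succ (k : ℕ) (ξ : R) :
    pascalProd ψ a b (k + 1) ξ = pascalProd ψ a b k (a * ξ) * pascalProd ψ a b k (b * ξ) := by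
  rw [pascalProd, Finset.prod_pow_choose_succ (fun i j ↦ ψ (a ^ i * b ^ j * ξ)), mul_comm]
  congr 1
  · refine prod_congr rfl fun j _ ↦ ?_
    rw [pow_succ]
    ac_rfl
  · refine prod_congr rfl fun j hj ↦ ?_
    rw [Nat.sub_add_comm (Nat.lt_succ_iff.mp (mem_range.mp hj)), pow_succ]
    ac_rfl

end Pascal

lemma norm_prod_pow_sub_one_le {ι R : Type*} [NormedCommRing R] [NormOneClass R]
    (s : Finset ι) (f : ι → R) (n : ι → ℕ) :
    ‖∏ i ∈ s, f i ^ n i - 1‖ ≤ Real.exp (∑ i ∈ s, n i * ‖f i - 1‖) - 1 := by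
  simpa [prod_sigma, sum_sigma] using
    (s.sigma fun i ↦ range (n i)).norm_prod_one_add_sub_one_le fun p ↦ f p.1 - 1

lemma summable_exp_mul_pow_sub_one {r : ℝ} (hr₀ : 0 ≤ r) (hr₁ : r < 1) (c : ℝ) :
    Summable fun k : ℕ ↦ Real.exp (c * r ^ k) - 1 := by
  have hlim : Filter.Tendsto (fun k : ℕ ↦ c * r ^ k) Filter.atTop (nhds 0) := by
    simpa using (tendsto_pow_atTop_nhds_zero_of_lt_one hr₀ hr₁).const_mul c
  refine Summable.of_norm_bounded_eventually_nat
    ((summable_geometric_of_lt_one hr₀ hr₁).mul_left (2 * |c|)) ?_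
  filter_upwards [hlim.abs.eventually (ge_mem_nhds (by simp : |(0 : ℝ)| < 1))] with k hk
  calc ‖Real.exp (c * r ^ k) - 1‖ ≤ 2 * |c * r ^ k| := Real.abs_exp_sub_one_le hk
    _ = 2 * |c| * r ^ k := by rw [abs_mul, abs_of_nonneg (pow_nonneg hr₀ k), mul_assoc]

section Quadratic

variable {ψ : ℝ → ℂ} {M a b : ℝ} (hψ : ∀ η, ‖ψ η - 1‖ ≤ M * η ^ 2)
include hψ

lemma norm_pascalProd_sub_one_le (k : ℕ) (ξ : ℝ) :
    ‖pascalProd ψ a b k ξ - 1‖ ≤ Real.exp (M * ξ ^ 2 * (a ^ 2 + b ^ 2) ^ k) - 1 := by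
  refine (norm_prod_pow_sub_one_le _ _ _).trans ?_
  gcongr
  calc ∑ j ∈ range (k + 1), (k.choose j : ℝ) * ‖ψ (a ^ j * b ^ (k - j) * ξ) - 1‖
      ≤ ∑ j ∈ range (k + 1), (k.choose j : ℝ) * (M * (a ^ j * b ^ (k - j) * ξ) ^ 2) := by
        gcongr with j; exact hψ _
    _ = M * ξ ^ 2 * (a ^ 2 + b ^ 2) ^ k := by
        rw [add_pow, mul_sum]
        refine sum_congr rfl fun j _ ↦ ?_
        ring

lemma multipliable_pascalProd (hab₁ : a ^ 2 + b ^ 2 < 1) (ξ : ℝ) :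
    Multipliable fun k ↦ pascalProd ψ a b k ξ := by
  have hsum : Summable fun k ↦ ‖pascalProd ψ a b k ξ - 1‖ :=
    (summable_exp_mul_pow_sub_one (by positivity) hab₁ _).of_nonneg_of_le (fun _ ↦ norm_nonneg _)
      (norm_pascalProd_sub_one_le hψ · ξ)
  simpa using multipliable_one_add_of_summable hsum

lemma tprod_pascalProd_eq (hab₁ : a ^ 2 + b ^ 2 < 1) (ξ : ℝ) :
    ∏' k, pascalProd ψ a b k ξ =
      (∏' k, pascalProd ψ a b k (a * ξ)) * (∏' k, pascalProd ψ a b k (b * ξ)) * ψ ξ := by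
  have ha := multipliable_pascalProd hψ hab₁ (a * ξ)
  have hb := multipliable_pascalProd hψ hab₁ (b * ξ)
  rw [tprod_eq_zero_mul' (by simpa only [pascalProd_succ] using ha.mul hb)]
  simp only [pascalProd_succ, pascalProd_zero, ha.tprod_mul hb]
  ring

end Quadratic

def cft (φ : ℝ → ℂ) (ξ : ℝ) : ℂ :=
  ∫ x : ℝ, φ x * cexp (-(I * ξ * x))

lemma norm_cexp_neg_I_mul (ξ x : ℝ) : ‖cexp (-(I * ξ * x))‖ = 1 := by
  rw [Complex.norm_exp]
  simp

lemma cft_zero (φ : ℝ → ℂ) : cft φ 0 = ∫ x, φ x := by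
  simp [cft]

lemma norm_cft_le (φ : ℝ → ℂ) (ξ : ℝ) : ‖cft φ ξ‖ ≤ ∫ x, ‖φ x‖ :=
  (norm_integral_le_integral_norm _).trans_eq <| by simp_rw [norm_mul, norm_cexp_neg_I_mul, mul_one]

lemma hasDerivAt_cft {φ : ℝ → ℂ} (hφ : Integrable φ) (hxφ : Integrable fun x : ℝ ↦ (x : ℂ) * φ x)
    (ξ : ℝ) : HasDerivAt (cft φ) (cft (fun x ↦ -I * x * φ x) ξ) ξ := by
  have hcont (η : ℝ) : Continuous fun x : ℝ ↦ cexp (-(I * η * x)) := by fun_prop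
  refine (hasDerivAt_integral_of_dominated_loc_of_deriv_le
    (F := fun (η x : ℝ) ↦ φ x * cexp (-(I * η * x)))
    (F' := fun (η x : ℝ) ↦ -I * x * φ x * cexp (-(I * η * x)))
    (bound := fun x : ℝ ↦ ‖(x : ℂ) * φ x‖) Filter.univ_mem
    (.of_forall fun η ↦ hφ.1.mul (hcont η).aestronglyMeasurable) ?_ ?_ ?_ hxφ.norm ?_).2
  · exact (hφ.norm.mono' (hφ.1.mul (hcont ξ).aestronglyMeasurable)
      (.of_forall fun x ↦ by rw [norm_mul, norm_cexp_neg_I_mul, mul_one]))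
  · exact ((hxφ.1.const_mul (-I)).mul (hcont ξ).aestronglyMeasurable).congr
      (.of_forall fun x ↦ by simp only [Pi.mul_apply]; ring)
  · refine .of_forall fun x η _ ↦ ?_
    simp [norm_cexp_neg_I_mul]
  · refine .of_forall fun x η _ ↦ ?_
    have hlin : HasDerivAt (fun η : ℝ ↦ -(I * η * x)) (-I * x) η := by
      have h := (hasDerivAt_id η).ofReal_comp.mul_const (-I * x)
      rw [ofReal_one, one_mul] at h
      exact h.congr_of_eventuallyEq (.of_forall fun y ↦ by simp only [id]; ring)
    exact (hlin.cexp.const_mul (φ x)).congr_deriv (by ring)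

lemma norm_sub_le_mul_sq_of_hasDerivAt {E : Type*} [NormedAddCommGroup E] [NormedSpace ℝ E]
    {ψ ψ' ψ'' : ℝ → E} {M : ℝ} (hψ : ∀ t, HasDerivAt ψ (ψ' t) t)
    (hψ' : ∀ t, HasDerivAt ψ' (ψ'' t) t) (hM : ∀ t, ‖ψ'' t‖ ≤ M) (h0 : ψ' 0 = 0) (η : ℝ) :
    ‖ψ η - ψ 0‖ ≤ M * η ^ 2 := by
  have hM₀ : 0 ≤ M := (norm_nonneg _).trans (hM 0)
  have hψ'_le (t : ℝ) : ‖ψ' t‖ ≤ M * |t| := by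
    simpa [h0] using convex_univ.norm_image_sub_le_of_norm_hasDerivWithin_le
      (fun t _ ↦ (hψ' t).hasDerivWithinAt) (fun t _ ↦ hM t) (Set.mem_univ 0) (Set.mem_univ t)
  calc ‖ψ η - ψ 0‖ ≤ M * |η| * ‖η - 0‖ :=
        (convex_closedBall 0 |η|).norm_image_sub_le_of_norm_hasDerivWithin_le
          (fun t _ ↦ (hψ t).hasDerivWithinAt)
          (fun t ht ↦ (hψ'_le t).trans (mul_le_mul_of_nonneg_left (by simpa using ht) hM₀))
          (Metric.mem_closedBall_self (abs_nonneg η)) (by simp)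
    _ = M * η ^ 2 := by rw [sub_zero, Real.norm_eq_abs, mul_assoc, ← sq, sq_abs]

lemma HasDerivAt.comp_const_mul_ofReal {f : ℝ → ℂ} {f' : ℂ} {a x : ℝ}
    (hf : HasDerivAt f f' (a * x)) : HasDerivAt (fun y ↦ f (a * y)) (a * f') x := by
  simpa [Function.comp_def] using hf.scomp x ((hasDerivAt_id x).const_mul a)

lemma deriv2_zero_eq_of_functional_eq {φ φ' φ'' ψ ψ' ψ'' : ℝ → ℂ} {a b : ℝ}
    (hφ : ∀ ξ, HasDerivAt φ (φ' ξ) ξ) (hφ' : HasDerivAt φ' (φ'' 0) 0)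
    (hψ : ∀ ξ, HasDerivAt ψ (ψ' ξ) ξ) (hψ' : HasDerivAt ψ' (ψ'' 0) 0)
    (hφ0 : φ 0 = 1) (hψ0 : ψ 0 = 1) (hψ'0 : ψ' 0 = 0)
    (heq : ∀ ξ, φ ξ = φ (a * ξ) * φ (b * ξ) * ψ ξ) :
    φ'' 0 = (a ^ 2 + b ^ 2) * φ'' 0 + 2 * a * b * φ' 0 ^ 2 + ψ'' 0 := by
  have hφa (ξ : ℝ) := (hφ (a * ξ)).comp_const_mul_ofReal
  have hφb (ξ : ℝ) := (hφ (b * ξ)).comp_const_mul_ofReal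
  have hφ'_eq (ξ : ℝ) : φ' ξ = (a * φ' (a * ξ) * φ (b * ξ) + φ (a * ξ) * (b * φ' (b * ξ))) * ψ ξ
      + φ (a * ξ) * φ (b * ξ) * ψ' ξ :=
    (hφ ξ).unique <| (((hφa ξ).mul (hφb ξ)).mul (hψ ξ)).congr_of_eventuallyEq (.of_forall heq)
  have hφ'a : HasDerivAt (fun ξ ↦ φ' (a * ξ)) (a * φ'' 0) 0 :=
    HasDerivAt.comp_const_mul_ofReal (by rwa [mul_zero])
  have hφ'b : HasDerivAt (fun ξ ↦ φ' (b * ξ)) (b * φ'' 0) 0 :=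
    HasDerivAt.comp_const_mul_ofReal (by rwa [mul_zero])
  have hφ'' := (((hφ'a.const_mul (a : ℂ)).mul (hφb 0) |>.add
    ((hφa 0).mul (hφ'b.const_mul (b : ℂ)))).mul (hψ 0)).add
      (((hφa 0).mul (hφb 0)).mul hψ')
  have key := hφ'.unique (hφ''.congr_of_eventuallyEq (.of_forall hφ'_eq))
  simp only [Pi.add_apply, Pi.mul_apply, mul_zero, hφ0, hψ0, hψ'0] at key
  linear_combination key

section Moments

variable {h : ℝ → ℝ}

lemma hasDerivAt_ft (h0 : Integrable h) (h1 : Integrable fun x ↦ x * h x) (ξ : ℝ) :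
    HasDerivAt (ft h) (cft (fun x ↦ -I * x * h x) ξ) ξ :=
  hasDerivAt_cft h0.ofReal (by simpa using h1.ofReal (𝕜 := ℂ)) ξ

lemma hasDerivAt_cft_neg_I_mul (h1 : Integrable fun x ↦ x * h x)
    (h2 : Integrable fun x ↦ x ^ 2 * h x) (ξ : ℝ) :
    HasDerivAt (cft fun x ↦ -I * x * h x) (cft (fun x ↦ -((x ^ 2 * h x : ℝ) : ℂ)) ξ) ξ := by
  have hφ : Integrable fun x : ℝ ↦ -I * x * h x := by
    simpa [mul_assoc] using h1.ofReal.const_mul (-I)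
  have hxφ : Integrable fun x : ℝ ↦ (x : ℂ) * (-I * x * h x) := by
    simpa [mul_assoc, mul_left_comm, sq] using h2.ofReal.const_mul (-I)
  convert hasDerivAt_cft hφ hxφ ξ using 3 with x
  push_cast
  linear_combination -(x : ℂ) ^ 2 * h x * I_sq

lemma ft_zero : ft h 0 = ∫ x, h x := by
  rw [ft, ← cft, cft_zero, integral_complex_ofReal]

lemma cft_neg_I_mul_zero : cft (fun x ↦ -I * x * h x) 0 = -I * ∫ x, x * h x := by
  simp_rw [cft_zero, mul_assoc, integral_const_mul]
  norm_cast

lemma cft_neg_ofReal_zero (u : ℝ → ℝ) : cft (fun x ↦ -(u x : ℂ)) 0 = -∫ x, u x := by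
  rw [cft_zero, integral_neg, integral_complex_ofReal]

end Moments

section Density

variable {g : ℝ → ℝ} (hg_int : Integrable g) (hg_mass : ∫ x, g x = 1)
  (hg_mom1 : Integrable fun x ↦ x * g x) (hg_mom2 : Integrable fun x ↦ x ^ 2 * g x)
  (hg_mean : ∫ x, x * g x = 0)
include hg_int hg_mass hg_mom1 hg_mom2 hg_mean

lemma norm_ft_sub_one_le (η : ℝ) : ‖ft g η - 1‖ ≤ (∫ x, x ^ 2 * |g x|) * η ^ 2 := by
  have h := norm_sub_le_mul_sq_of_hasDerivAt (M := ∫ x, x ^ 2 * |g x|)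
    (hasDerivAt_ft hg_int hg_mom1) (hasDerivAt_cft_neg_I_mul hg_mom1 hg_mom2)
    (fun t ↦ (norm_cft_le _ t).trans_eq (by simp))
    (by rw [cft_neg_I_mul_zero, hg_mean, ofReal_zero, mul_zero]) η
  rwa [ft_zero, hg_mass, ofReal_one] at h

lemma variance_eq_of_ft_eq_mul {f : ℝ → ℝ} {lam : ℝ} (hlam₀ : 0 < lam) (hlam₁ : lam < 1)
    (hf_int : Integrable f) (hf_mass : ∫ x, f x = 1) (hf_mom1 : Integrable fun x ↦ x * f x)
    (hf_mom2 : Integrable fun x ↦ x ^ 2 * f x)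
    (heq : ∀ ξ, ft f ξ = ft f (lam * ξ) * ft f ((1 - lam) * ξ) * ft g ξ) :
    (∫ x, x ^ 2 * f x) - (∫ x, x * f x) ^ 2 = (∫ x, x ^ 2 * g x) / (2 * lam * (1 - lam)) := by
  have key := deriv2_zero_eq_of_functional_eq (hasDerivAt_ft hf_int hf_mom1)
    (hasDerivAt_cft_neg_I_mul hf_mom1 hf_mom2 0) (hasDerivAt_ft hg_int hg_mom1)
    (hasDerivAt_cft_neg_I_mul hg_mom1 hg_mom2 0) (by rw [ft_zero, hf_mass, ofReal_one])
    (by rw [ft_zero, hg_mass, ofReal_one])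
    (by rw [cft_neg_I_mul_zero, hg_mean, ofReal_zero, mul_zero]) heq
  simp only [cft_neg_I_mul_zero, cft_neg_ofReal_zero, ofReal_sub, ofReal_one] at key
  set s := ∫ x, x ^ 2 * f x
  set m := ∫ x, x * f x
  have hpos : 0 < 2 * lam * (1 - lam) := by have := sub_pos.2 hlam₁; positivity
  rw [eq_div_iff hpos.ne']
  exact_mod_cast (by linear_combination -key - 2 * lam * (1 - lam) * (m : ℂ) ^ 2 * I_sq :
    ((s - m ^ 2) * (2 * lam * (1 - lam)) : ℂ) = ∫ x, x ^ 2 * g x)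

end Density

end

theorem stmt_4 (lam : ℝ) (hlam₀ : 0 < lam) (hlam₁ : lam < 1)
    (g : ℝ → ℝ)
    (hg_int : Integrable g)
    (hg_mass : ∫ x : ℝ, g x = 1)
    (hg_mom1 : Integrable (fun x => x * g x))
    (hg_mom2 : Integrable (fun x => x ^ 2 * g x))
    (hg_mean : (∫ x : ℝ, x * g x) = 0) :
    (∀ ξ : ℝ, fhat g lam ξ = fhat g lam (lam * ξ) * fhat g lam ((1 - lam) * ξ) * ft g ξ) ∧
    (∀ f : ℝ → ℝ, (∀ x, 0 ≤ f x) → Integrable f → (∫ x : ℝ, f x = 1) →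
      Integrable (fun x => x * f x) → Integrable (fun x => x ^ 2 * f x) →
      (∀ ξ : ℝ, ft f ξ = fhat g lam ξ) →
      (∫ x : ℝ, x ^ 2 * f x) - (∫ x : ℝ, x * f x) ^ 2 =
        ((∫ x : ℝ, x ^ 2 * g x) - (∫ x : ℝ, x * g x) ^ 2) / (2 * lam * (1 - lam))) := by
  have hg_ft := norm_ft_sub_one_le hg_int hg_mass hg_mom1 hg_mom2 hg_mean
  have hr : lam ^ 2 + (1 - lam) ^ 2 < 1 := by nlinarith
  have hfe (ξ : ℝ) : fhat g lam ξ = fhat g lam (lam * ξ) * fhat g lam ((1 - lam) * ξ) * ft g ξ :=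
    tprod_pascalProd_eq hg_ft hr ξ
  refine ⟨hfe, fun f _ hf_int hf_mass hf_mom1 hf_mom2 hf_ft ↦ ?_⟩
  rw [hg_mean, zero_pow two_ne_zero, sub_zero]
  refine variance_eq_of_ft_eq_mul hg_int hg_mass hg_mom1 hg_mom2 hg_mean hlam₀ hlam₁ hf_int hf_mass
    hf_mom1 hf_mom2 fun ξ ↦ ?_
  rw [hf_ft, hf_ft, hf_ft]
  exact hfe ξ
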